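/- arXiv:2211.15548 — 3 statements merged into one kernel-verified Lean document; each statement's English description precedes it below -/
import Mathlib

section
/- Let H be a finite dimensional complex Hilbert space and A ∈ B(H) a contraction (‖A‖ ≤ 1). Then there exists an orthogonal decomposition H = H₀ ⊕ H₁, reducing for A, such that A restricted to H₁ is unitary and the powers of A restricted to H₀ converge to 0. -/
/-!
Let `M = {x | ‖Aⁿ x‖ = ‖x‖ for all n}`. For a contraction `T`, `‖T x‖ = ‖x‖` holds iff
`T† T x = x`, so `M` is a subspace. It is `A`-invariant and `A` is injective on it, hence onto in
finite dimension; together with `A† A = 1` on `M` this makes `Mᗮ` invariant. For `x ∈ Mᗮ` the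
norms `‖Aⁿ x‖` decrease to some `c`, and by compactness the orbit has a limit point `y`, which
satisfies `‖Aᵐ y‖ = c` for all `m`. Then `y ∈ M ∩ Mᗮ = 0`, so `c = 0`.
-/

open Filter Topology

namespace ContinuousLinearMap

section NormedSpace

variable {𝕜 E : Type*} [NontriviallyNormedField 𝕜] [NormedAddCommGroup E] [NormedSpace 𝕜 E]

theorem norm_pow_apply_eq_of_tendsto_subseq {T : E →L[𝕜] E} {x y : E} {c : ℝ}
    (hc : Tendsto (fun n => ‖(T ^ n) x‖) atTop (𝓝 c)) {φ : ℕ → ℕ} (hφ : StrictMono φ)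
    (hy : Tendsto (fun k => (T ^ φ k) x) atTop (𝓝 y)) (m : ℕ) : ‖(T ^ m) y‖ = c := by
  have hlim : Tendsto (fun k => ‖(T ^ (m + φ k)) x‖) atTop (𝓝 ‖(T ^ m) y‖) := by
    simpa only [pow_add, mul_apply_eq_comp, Function.comp_def] using
      (((T ^ m).continuous.tendsto y).comp hy).norm
  exact tendsto_nhds_unique hlim
    (hc.comp (tendsto_atTop_mono (fun k => Nat.le_add_left _ m) hφ.tendsto_atTop))

theorem norm_pow_le_one {T : E →L[𝕜] E} (hT : ‖T‖ ≤ 1) (n : ℕ) : ‖T ^ n‖ ≤ 1 := by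
  cases n with
  | zero => exact norm_id_le
  | succ n => exact (norm_pow_le' T n.succ_pos).trans (pow_le_one₀ (norm_nonneg T) hT)

theorem antitone_norm_pow_apply {T : E →L[𝕜] E} (hT : ‖T‖ ≤ 1) (x : E) :
    Antitone fun n => ‖(T ^ n) x‖ :=
  antitone_nat_of_succ_le fun n => by
    rw [pow_succ', mul_apply_eq_comp]
    exact le_of_opNorm_le _ hT _ |>.trans_eq (one_mul _)

end NormedSpace

variable {𝕜 E : Type*} [RCLike 𝕜] [NormedAddCommGroup E] [InnerProductSpace 𝕜 E] [CompleteSpace E]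

theorem adjoint_apply_apply_eq_iff_norm_apply_eq {T : E →L[𝕜] E} (hT : ‖T‖ ≤ 1) (x : E) :
    adjoint T (T x) = x ↔ ‖T x‖ = ‖x‖ := by
  have hTx : ‖T x‖ ^ 2 = RCLike.re (inner 𝕜 (adjoint T (T x)) x) :=
    apply_norm_sq_eq_inner_adjoint_left T x
  constructor
  · intro h
    rw [h, inner_self_eq_norm_sq] at hTx
    exact (pow_left_inj₀ (norm_nonneg _) (norm_nonneg _) two_ne_zero).mp hTx
  · intro h
    have hle : ‖adjoint T (T x)‖ ≤ ‖x‖ := by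
      calc ‖adjoint T (T x)‖ ≤ ‖adjoint T‖ * ‖T x‖ := le_opNorm _ _
        _ ≤ 1 * ‖x‖ := by rw [adjoint.norm_map, h]; gcongr
        _ = ‖x‖ := one_mul _
    -- `‖T† T x - x‖² = ‖T† T x‖² - 2 ‖T x‖² + ‖x‖² ≤ 0`
    rw [← sub_eq_zero, ← norm_eq_zero, ← sq_eq_zero_iff (M₀ := ℝ)]
    have hexpand := norm_sub_sq (𝕜 := 𝕜) (adjoint T (T x)) x
    nlinarith [norm_nonneg (adjoint T (T x)), norm_nonneg x, sq_nonneg ‖adjoint T (T x) - x‖]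

/-- For a contraction this is `{x | ∀ n, ‖Tⁿ x‖ = ‖x‖}` (`mem_isometricPart_iff`); the kernel form
makes it a subspace without further work. -/
noncomputable def isometricPart (T : E →L[𝕜] E) : Submodule 𝕜 E :=
  ⨅ n : ℕ, LinearMap.ker ((adjoint (T ^ n) * T ^ n - 1 : E →L[𝕜] E) : E →ₗ[𝕜] E)

variable {T : E →L[𝕜] E} (hT : ‖T‖ ≤ 1)
include hT

theorem mem_isometricPart_iff {x : E} : x ∈ isometricPart T ↔ ∀ n, ‖(T ^ n) x‖ = ‖x‖ := by
  simp only [isometricPart, Submodule.mem_iInf, LinearMap.mem_ker, coe_coe, sub_apply,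
    mul_apply_eq_comp, one_apply_eq_self, sub_eq_zero,
    adjoint_apply_apply_eq_iff_norm_apply_eq (norm_pow_le_one hT _)]

theorem norm_apply_of_mem_isometricPart {x : E} (hx : x ∈ isometricPart T) : ‖T x‖ = ‖x‖ := by
  simpa using (mem_isometricPart_iff hT).mp hx 1

theorem mapsTo_isometricPart : Set.MapsTo T (isometricPart T) (isometricPart T) := by
  intro x hx
  rw [SetLike.mem_coe, mem_isometricPart_iff hT] at hx ⊢
  intro n
  rw [← mul_apply_eq_comp, ← pow_succ, hx, ← pow_one T, hx 1]

section FiniteDimensional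

variable [FiniteDimensional 𝕜 E]

theorem surjOn_isometricPart : Set.SurjOn T (isometricPart T) (isometricPart T) := by
  intro y hy
  let S : isometricPart T →ₗ[𝕜] isometricPart T :=
    (T : E →ₗ[𝕜] E).restrict (mapsTo_isometricPart hT)
  have hS : Function.Injective S := by
    refine (injective_iff_map_eq_zero S).mpr fun x hx => ?_
    have hTx : T x = 0 := congrArg Subtype.val hx
    have hx0 : ‖(x : E)‖ = 0 := by rw [← norm_apply_of_mem_isometricPart hT x.2, hTx, norm_zero]
    exact Subtype.ext (norm_eq_zero.mp hx0)
  obtain ⟨x, hx⟩ := LinearMap.injective_iff_surjective.mp hS ⟨y, hy⟩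
  exact ⟨x, x.2, congrArg Subtype.val hx⟩

theorem mapsTo_orthogonal_isometricPart :
    Set.MapsTo T (isometricPart T)ᗮ (isometricPart T)ᗮ := by
  intro x hx
  rw [SetLike.mem_coe, Submodule.mem_orthogonal] at hx ⊢
  intro _ hy
  obtain ⟨y, hyM, rfl⟩ := surjOn_isometricPart hT hy
  rw [← adjoint_inner_left, (adjoint_apply_apply_eq_iff_norm_apply_eq hT y).mpr
    (norm_apply_of_mem_isometricPart hT hyM)]
  exact hx y hyM

theorem tendsto_pow_apply_of_mem_orthogonal_isometricPart {x : E}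
    (hx : x ∈ (isometricPart T)ᗮ) : Tendsto (fun n => (T ^ n) x) atTop (𝓝 0) := by
  obtain ⟨c, hc⟩ : ∃ c, Tendsto (fun n => ‖(T ^ n) x‖) atTop (𝓝 c) :=
    ⟨_, tendsto_atTop_ciInf (antitone_norm_pow_apply hT x) ⟨0, by
      rintro _ ⟨n, rfl⟩; exact norm_nonneg _⟩⟩
  have horbit (n : ℕ) : (T ^ n) x ∈ (isometricPart T)ᗮ := by
    rw [FunLike.coe_pow_eq_iterate]
    exact (mapsTo_orthogonal_isometricPart hT).iterate n hx
  have := FiniteDimensional.proper_rclike 𝕜 E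
  obtain ⟨y, -, φ, hφ, hy⟩ := tendsto_subseq_of_bounded (Metric.isBounded_closedBall (x := 0))
    fun n => mem_closedBall_zero_iff.mpr (le_of_opNorm_le _ (norm_pow_le_one hT n) x)
  have hyc := norm_pow_apply_eq_of_tendsto_subseq hc hφ hy
  have hyM : y ∈ isometricPart T :=
    (mem_isometricPart_iff hT).mpr fun m => by rw [hyc, ← hyc 0, pow_zero, one_apply_eq_self]
  have hyM' : y ∈ (isometricPart T)ᗮ :=
    (Submodule.isClosed_orthogonal _).mem_of_tendsto hy (.of_forall fun k => horbit (φ k))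
  have hc0 : c = 0 := by
    rw [← hyc 0, Submodule.disjoint_def.mp (Submodule.orthogonal_disjoint _) y hyM hyM', map_zero,
      norm_zero]
  rw [tendsto_zero_iff_norm_tendsto_zero, ← hc0]
  exact hc

end FiniteDimensional

end ContinuousLinearMap

/-- A contraction on a finite dimensional Hilbert space decomposes as the direct sum of a
unitary operator and an operator whose powers tend to `0`. -/
theorem contraction_unitary_cnu_decomposition
    {H : Type*} [NormedAddCommGroup H] [InnerProductSpace ℂ H] [FiniteDimensional ℂ H]
    (A : H →L[ℂ] H) (hA : ‖A‖ ≤ 1) :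
    ∃ M : Submodule ℂ H,
      (∀ x ∈ M, A x ∈ M) ∧ (∀ x ∈ Mᗮ, A x ∈ Mᗮ) ∧
      (∀ x ∈ M, ‖A x‖ = ‖x‖) ∧ (∀ y ∈ M, ∃ x ∈ M, A x = y) ∧
      (∀ x ∈ Mᗮ, Tendsto (fun n : ℕ => (A ^ n) x) atTop (𝓝 0)) :=
  ⟨A.isometricPart, A.mapsTo_isometricPart hA, A.mapsTo_orthogonal_isometricPart hA,
    fun _ => A.norm_apply_of_mem_isometricPart hA, A.surjOn_isometricPart hA,
    fun _ => A.tendsto_pow_apply_of_mem_orthogonal_isometricPart hA⟩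
end

section
/- Let A, B be contractions on finite dimensional Hilbert spaces H₁, H₂ and let X : H₁ → H₂ be a bounded operator with B* X A = X. Write A = A₀ ⊕ U on H₁ = M₁^⊥ ⊕ M₁ with U unitary and A₀ⁿ → 0, and B = B₀ ⊕ V on H₂ = M₂^⊥ ⊕ M₂ with V unitary and B₀ⁿ → 0. Then X vanishes on M₁^⊥ and its range is contained in M₂, i.e., X = X P_{M₁} = P_{M₂} X. -/
/-!
Iterating `B* X A = X` gives `X = (B*)ⁿ X Aⁿ`. Since `B*` is a contraction, `‖X x‖ ≤ ‖X (Aⁿ x)‖`,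
which tends to `0` when `x ∈ M₁ᗮ`. Taking adjoints, `A* X* B = X*` has the same shape, so `X*`
vanishes on `M₂ᗮ`, i.e. the range of `X` is orthogonal to `M₂ᗮ`.
-/

open ContinuousLinearMap Filter Topology

namespace ContinuousLinearMap

variable {𝕜 E F : Type*} [NontriviallyNormedField 𝕜]
  [SeminormedAddCommGroup E] [NormedSpace 𝕜 E] [NormedAddCommGroup F] [NormedSpace 𝕜 F]

theorem norm_pow_apply_le_of_norm_le_one {R : E →L[𝕜] E} (hR : ‖R‖ ≤ 1) (n : ℕ) (x : E) :
    ‖(R ^ n) x‖ ≤ ‖x‖ := by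
  induction n with
  | zero => simp
  | succ n ih =>
    rw [pow_succ', mul_apply_eq_comp]
    exact (R.le_opNorm_of_le ih).trans (mul_le_of_le_one_left (norm_nonneg _) hR)

theorem pow_apply_apply_pow_apply_eq {S : F →L[𝕜] F} {T : E →L[𝕜] F} {R : E →L[𝕜] E}
    (h : S.comp (T.comp R) = T) (n : ℕ) (x : E) : (S ^ n) (T ((R ^ n) x)) = T x := by
  induction n generalizing x with
  | zero => simp
  | succ n ih =>
    rw [pow_succ, pow_succ', mul_apply_eq_comp, mul_apply_eq_comp, ← ih x]
    exact congrArg (S ^ n) (DFunLike.congr_fun h _)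

theorem apply_eq_zero_of_comp_comp_eq {S : F →L[𝕜] F} {T : E →L[𝕜] F} {R : E →L[𝕜] E}
    (hS : ‖S‖ ≤ 1) (h : S.comp (T.comp R) = T) {x : E}
    (hx : Tendsto (fun n : ℕ => (R ^ n) x) atTop (𝓝 0)) : T x = 0 := by
  have hTx : Tendsto (fun n : ℕ => T ((R ^ n) x)) atTop (𝓝 0) :=
    (T.continuous.tendsto' 0 0 (map_zero T)).comp hx
  have hlim : Tendsto (fun n : ℕ => (S ^ n) (T ((R ^ n) x))) atTop (𝓝 0) :=
    squeeze_zero_norm (fun n => norm_pow_apply_le_of_norm_le_one hS n _)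
      (tendsto_norm_zero.comp hTx)
  simp only [pow_apply_apply_pow_apply_eq h] at hlim
  exact tendsto_nhds_unique tendsto_const_nhds hlim

end ContinuousLinearMap

theorem intertwiner_supported_on_unitary_parts_general
    {H₁ H₂ : Type*} [NormedAddCommGroup H₁] [InnerProductSpace ℂ H₁] [FiniteDimensional ℂ H₁]
    [NormedAddCommGroup H₂] [InnerProductSpace ℂ H₂] [FiniteDimensional ℂ H₂]
    (A : H₁ →L[ℂ] H₁) (B : H₂ →L[ℂ] H₂) (X : H₁ →L[ℂ] H₂)
    (hA : ‖A‖ ≤ 1) (hB : ‖B‖ ≤ 1)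
    (M₁ : Submodule ℂ H₁) (M₂ : Submodule ℂ H₂)
    -- `M₁` reduces `A`, `A|_{M₁}` is unitary and `(A|_{M₁ᗮ})ⁿ → 0`
    (hAcnu : ∀ x ∈ M₁ᗮ, Tendsto (fun n : ℕ => (A ^ n) x) atTop (𝓝 0))
    -- `M₂` reduces `B`, `B|_{M₂}` is unitary and `(B|_{M₂ᗮ})ⁿ → 0`
    (hBcnu : ∀ x ∈ M₂ᗮ, Tendsto (fun n : ℕ => (B ^ n) x) atTop (𝓝 0))
    (hX : (adjoint B).comp (X.comp A) = X) :
    (∀ x ∈ M₁ᗮ, X x = 0) ∧ (∀ x : H₁, X x ∈ M₂) := by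
  have hXadj : (adjoint A).comp ((adjoint X).comp B) = adjoint X := by
    simpa only [adjoint_comp, adjoint_adjoint, comp_assoc] using congrArg adjoint hX
  refine ⟨fun x hx => apply_eq_zero_of_comp_comp_eq (by rwa [adjoint.norm_map]) hX (hAcnu x hx),
    fun x => ?_⟩
  rw [← M₂.orthogonal_orthogonal, Submodule.mem_orthogonal]
  intro z hz
  have hXz : adjoint X z = 0 :=
    apply_eq_zero_of_comp_comp_eq (by rwa [adjoint.norm_map]) hXadj (hBcnu z hz)
  rw [← adjoint_inner_left, hXz, inner_zero_left]

/-- Let `A`, `B` be contractions on finite dimensional Hilbert spaces, decomposed as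
`A = A₀ ⊕ U` on `M₁ᗮ ⊕ M₁` and `B = B₀ ⊕ V` on `M₂ᗮ ⊕ M₂`, with `U`, `V` unitary and
`A₀ⁿ → 0`, `B₀ⁿ → 0`.  If `B* X A = X`, then `X` vanishes on `M₁ᗮ` and has range in `M₂`. -/
theorem intertwiner_supported_on_unitary_parts
    {H₁ H₂ : Type*} [NormedAddCommGroup H₁] [InnerProductSpace ℂ H₁] [FiniteDimensional ℂ H₁]
    [NormedAddCommGroup H₂] [InnerProductSpace ℂ H₂] [FiniteDimensional ℂ H₂]
    (A : H₁ →L[ℂ] H₁) (B : H₂ →L[ℂ] H₂) (X : H₁ →L[ℂ] H₂)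
    (hA : ‖A‖ ≤ 1) (hB : ‖B‖ ≤ 1)
    (M₁ : Submodule ℂ H₁) (M₂ : Submodule ℂ H₂)
    -- `M₁` reduces `A`, `A|_{M₁}` is unitary and `(A|_{M₁ᗮ})ⁿ → 0`
    (hAM : ∀ x ∈ M₁, A x ∈ M₁) (hAM' : ∀ x ∈ M₁ᗮ, A x ∈ M₁ᗮ)
    (hAiso : ∀ x ∈ M₁, ‖A x‖ = ‖x‖) (hAsurj : ∀ y ∈ M₁, ∃ x ∈ M₁, A x = y)
    (hAcnu : ∀ x ∈ M₁ᗮ, Tendsto (fun n : ℕ => (A ^ n) x) atTop (𝓝 0))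
    -- `M₂` reduces `B`, `B|_{M₂}` is unitary and `(B|_{M₂ᗮ})ⁿ → 0`
    (hBM : ∀ x ∈ M₂, B x ∈ M₂) (hBM' : ∀ x ∈ M₂ᗮ, B x ∈ M₂ᗮ)
    (hBiso : ∀ x ∈ M₂, ‖B x‖ = ‖x‖) (hBsurj : ∀ y ∈ M₂, ∃ x ∈ M₂, B x = y)
    (hBcnu : ∀ x ∈ M₂ᗮ, Tendsto (fun n : ℕ => (B ^ n) x) atTop (𝓝 0))
    (hX : (adjoint B).comp (X.comp A) = X) :
    (∀ x ∈ M₁ᗮ, X x = 0) ∧ (∀ x : H₁, X x ∈ M₂) :=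
  intertwiner_supported_on_unitary_parts_general A B X hA hB M₁ M₂ hAcnu hBcnu hX
end

section
/- The set 𝓑 = {[[f, 0], [h, ḡ]] : f, g ∈ A(𝔻), h ∈ C(𝕋)} is a closed unital subalgebra of M₂(C(𝕋)), with product given by [[f₁,0],[h₁,ḡ₁]]·[[f₂,0],[h₂,ḡ₂]] = [[f₁f₂, 0],[h₁f₂ + ḡ₁h₂, ḡ₁ḡ₂]]; moreover 𝓑 + 𝓑* is dense in M₂(C(𝕋)). -/
open MeasureTheory

noncomputable section

local instance : Fact (0 < (1:ℝ)) := ⟨one_pos⟩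

/-- The circle. -/
abbrev 𝕋 := AddCircle (1 : ℝ)
/-- `L²(𝕋)` with respect to normalized Haar measure. -/
abbrev L2 := Lp ℂ 2 (@AddCircle.haarAddCircle 1 _)

/-- The Hardy space `H² ⊂ L²(𝕋)`: the closed span of the characters `zⁿ`, `n ≥ 0`
(the functions with vanishing negative Fourier coefficients). -/
def hardy : Submodule ℂ L2 :=
  (Submodule.span ℂ (Set.range fun n : ℕ => fourierLp 2 (n : ℤ))).topologicalClosure

instance : CompleteSpace hardy :=
  (Submodule.isClosed_topologicalClosure _).completeSpace_coe

/-- Multiplication of an `L²` function by a continuous function. -/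
def cmul (h : C(𝕋, ℂ)) (f : L2) : L2 :=
  (MemLp.toLp (fun x => h x * f.1 x)
    (by
      have hf : MemLp (f : 𝕋 → ℂ) 2 _ := Lp.memLp f
      have hh : MemLp (⇑h) ⊤ (@AddCircle.haarAddCircle 1 _) :=
        MemLp.of_bound h.continuous.aestronglyMeasurable ‖h‖
          (Filter.Eventually.of_forall fun x => h.norm_coe_le_norm x)
      simpa [smul_eq_mul, mul_comm] using hf.mul' hh))

/-- The Toeplitz operator `T_h = P ∘ M_h` on the Hardy space, for a continuous symbol `h`. -/
def toeplitz (h : C(𝕋, ℂ)) (f : hardy) : hardy :=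
  hardy.orthogonalProjectionOnto (cmul h ↑f)

/-- The disc algebra `A(𝔻) ⊂ C(𝕋)`: the uniform closure of the polynomials in `z`. -/
def discAlgebra : Subalgebra ℂ C(𝕋, ℂ) :=
  (Algebra.adjoin ℂ {fourier (T := 1) 1}).topologicalClosure
/-- The algebra `𝓑 = {[[f, 0], [h, ḡ]] : f, g ∈ A(𝔻), h ∈ C(𝕋)} ⊂ M₂(C(𝕋))`. -/
def scriptB : Set (Matrix (Fin 2) (Fin 2) C(𝕋, ℂ)) :=
  {a | ∃ f g h : C(𝕋, ℂ), f ∈ discAlgebra ∧ g ∈ discAlgebra ∧ a = !![f, 0; h, star g]}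

/-! `𝓑` is the case `A = A(𝔻)` of the lower triangular `2 × 2` matrices with diagonal entries in
`A` and `A*`, which form a subalgebra for any subalgebra `A` of a star algebra, closed when `A` is.
The off-diagonal entries of `a + b*` (`a, b ∈ 𝓑`) are arbitrary and its diagonal entries range
over `A + A*`, so `𝓑 + 𝓑*` is dense as soon as `A(𝔻) + A(𝔻)*` is. The latter contains every
character `zⁿ`, `n ∈ ℤ`, and these span a dense subspace of `C(𝕋)` by Stone–Weierstrass. -/

open scoped Pointwise

namespace Matrix

variable {R : Type*}

theorem lowerTriangular_mul_fin_two [NonUnitalNonAssocSemiring R] (a b c d e f : R) :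
    !![a, 0; b, c] * !![d, 0; e, f] = !![a * d, 0; b * d + c * e, c * f] := by
  simp

theorem dense_setOf_forall_diag_mem {n : Type*} [TopologicalSpace R] {S : Set R}
    (hS : Dense S) : Dense {x : Matrix n n R | ∀ i, x i i ∈ S} := by
  classical
  have hpi : {x : n → n → R | ∀ i, x i i ∈ S} =
      Set.univ.pi fun i => Set.univ.pi fun j => if i = j then S else Set.univ := by
    ext x
    simp only [Set.mem_univ_pi]
    refine ⟨fun hx i j => ?_, fun hx i => by simpa using hx i i⟩
    split_ifs with hij
    · exact hij ▸ hx i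
    · trivial
  change Dense {x : n → n → R | ∀ i, x i i ∈ S}
  rw [hpi]
  refine dense_pi _ fun i _ => dense_pi _ fun j _ => ?_
  split_ifs
  · exact hS
  · exact dense_univ

end Matrix

namespace Subalgebra

variable {𝕜 R : Type*} [CommSemiring 𝕜] [StarRing 𝕜] [Semiring R] [StarRing R] [Algebra 𝕜 R]
  [StarModule 𝕜 R]

def lowerTriangularStar (A : Subalgebra 𝕜 R) : Subalgebra 𝕜 (Matrix (Fin 2) (Fin 2) R) where
  carrier := {a | ∃ f g h : R, f ∈ A ∧ g ∈ A ∧ a = !![f, 0; h, star g]}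
  mul_mem' := by
    rintro _ _ ⟨f₁, g₁, h₁, hf₁, hg₁, rfl⟩ ⟨f₂, g₂, h₂, hf₂, hg₂, rfl⟩
    exact ⟨f₁ * f₂, g₂ * g₁, h₁ * f₂ + star g₁ * h₂, mul_mem hf₁ hf₂, mul_mem hg₂ hg₁, by
      rw [Matrix.lowerTriangular_mul_fin_two, star_mul]⟩
  add_mem' := by
    rintro _ _ ⟨f₁, g₁, h₁, hf₁, hg₁, rfl⟩ ⟨f₂, g₂, h₂, hf₂, hg₂, rfl⟩
    exact ⟨f₁ + f₂, g₁ + g₂, h₁ + h₂, add_mem hf₁ hf₂, add_mem hg₁ hg₂, by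
      simp [Matrix.of_add_of, star_add]⟩
  algebraMap_mem' c := ⟨algebraMap 𝕜 R c, algebraMap 𝕜 R (star c), 0, A.algebraMap_mem c,
    A.algebraMap_mem _, by
      rw [Matrix.algebraMap_eq_diagonal, Matrix.diagonal_fin_two, ← algebraMap_star_comm,
        star_star]; rfl⟩

variable {A : Subalgebra 𝕜 R}

theorem mem_lowerTriangularStar_iff {a : Matrix (Fin 2) (Fin 2) R} :
    a ∈ A.lowerTriangularStar ↔ a 0 0 ∈ A ∧ a 0 1 = 0 ∧ star (a 1 1) ∈ A := by
  constructor
  · rintro ⟨f, g, h, hf, hg, rfl⟩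
    simpa using ⟨hf, hg⟩
  · rintro ⟨h₀₀, h₀₁, h₁₁⟩
    refine ⟨a 0 0, star (a 1 1), a 1 0, h₀₀, h₁₁, ?_⟩
    rw [star_star, ← h₀₁]
    exact Matrix.eta_fin_two a

theorem isClosed_lowerTriangularStar [TopologicalSpace R] [T1Space R] [ContinuousStar R]
    (hA : IsClosed (A : Set R)) :
    IsClosed (A.lowerTriangularStar : Set (Matrix (Fin 2) (Fin 2) R)) := by
  have hentry (i j : Fin 2) : Continuous fun a : Matrix (Fin 2) (Fin 2) R => a i j :=
    continuous_id.matrix_elem i j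
  have : (A.lowerTriangularStar : Set (Matrix (Fin 2) (Fin 2) R)) =
      (· 0 0) ⁻¹' A ∩ (· 0 1) ⁻¹' {0} ∩ (star <| · 1 1) ⁻¹' A := by
    ext a
    simp [mem_lowerTriangularStar_iff, and_assoc]
  rw [this]
  exact ((hA.preimage (hentry 0 0)).inter (isClosed_singleton.preimage (hentry 0 1))).inter
    (hA.preimage ((hentry 1 1).star))

theorem dense_add_star_lowerTriangularStar [TopologicalSpace R]
    (hA : Dense ((A : Set R) + star (A : Set R))) :
    Dense {x : Matrix (Fin 2) (Fin 2) R |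
      ∃ a ∈ A.lowerTriangularStar, ∃ b ∈ A.lowerTriangularStar, x = a + star b} := by
  refine (Matrix.dense_setOf_forall_diag_mem hA).mono fun x hx => ?_
  obtain ⟨f₁, hf₁, f₂, hf₂, hx₀₀⟩ := hx 0
  obtain ⟨g₁, hg₁, g₂, hg₂, hx₁₁⟩ := hx 1
  refine ⟨!![f₁, 0; x 1 0, star (star g₂)], ⟨_, _, _, hf₁, hg₂, rfl⟩,
    !![star f₂, 0; star (x 0 1), star g₁], ⟨_, _, _, hf₂, hg₁, rfl⟩, ?_⟩
  rw [Matrix.eta_fin_two x, ← hx₀₀, ← hx₁₁]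
  ext i j
  fin_cases i <;> fin_cases j <;> simp [add_comm]

end Subalgebra

theorem fourier_natCast_eq_pow {T : ℝ} (n : ℕ) : fourier (T := T) n = fourier 1 ^ n := by
  ext x
  simp [fourier_apply, AddCircle.toCircle_nsmul]

theorem star_fourier {T : ℝ} (n : ℤ) : star (fourier (T := T) n) = fourier (-n) := by
  ext x
  simp

theorem fourier_mem_discAlgebra_add_star (n : ℤ) :
    fourier n ∈ (discAlgebra : Set C(𝕋, ℂ)) + star (discAlgebra : Set C(𝕋, ℂ)) := by
  have hz : fourier 1 ∈ discAlgebra :=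
    Subalgebra.le_topologicalClosure _ (Algebra.self_mem_adjoin_singleton ℂ _)
  obtain ⟨m, rfl | rfl⟩ := n.eq_nat_or_neg
  · exact ⟨_, fourier_natCast_eq_pow m ▸ pow_mem hz m, 0, by simp, add_zero _⟩
  · refine ⟨0, zero_mem _, _, ?_, zero_add _⟩
    rw [Set.mem_star, star_fourier, neg_neg, fourier_natCast_eq_pow]
    exact pow_mem hz m

theorem dense_discAlgebra_add_star :
    Dense ((discAlgebra : Set C(𝕋, ℂ)) + star (discAlgebra : Set C(𝕋, ℂ))) := by
  let S := Subalgebra.toSubmodule discAlgebra ⊔ Subalgebra.toSubmodule (star discAlgebra)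
  have hS : (S : Set C(𝕋, ℂ)) = discAlgebra + star (discAlgebra : Set C(𝕋, ℂ)) :=
    Submodule.coe_sup _ _
  have hspan : Submodule.span ℂ (Set.range fourier) ≤ S :=
    Submodule.span_le.mpr <| Set.range_subset_iff.mpr fun n =>
      hS ▸ fourier_mem_discAlgebra_add_star n
  rw [← hS, Submodule.dense_iff_topologicalClosure_eq_top, eq_top_iff,
    ← span_fourier_closure_eq_top]
  exact Submodule.topologicalClosure_mono hspan

/-- `𝓑` is a closed unital subalgebra of `M₂(C(𝕋))`, with the stated product formula, and
`𝓑 + 𝓑*` is dense in `M₂(C(𝕋))`. -/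
theorem scriptB_closed_subalgebra_and_selfadjoint_dense :
    -- `𝓑` is closed
    IsClosed scriptB ∧
    -- `𝓑` is a unital subalgebra
    (1 ∈ scriptB) ∧
    (∀ a ∈ scriptB, ∀ b ∈ scriptB, a + b ∈ scriptB) ∧
    (∀ (c : ℂ), ∀ a ∈ scriptB, c • a ∈ scriptB) ∧
    (∀ a ∈ scriptB, ∀ b ∈ scriptB, a * b ∈ scriptB) ∧
    -- the product formula
    (∀ f₁ g₁ h₁ f₂ g₂ h₂ : C(𝕋, ℂ),
      (!![f₁, 0; h₁, star g₁] : Matrix (Fin 2) (Fin 2) C(𝕋, ℂ)) * !![f₂, 0; h₂, star g₂] =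
        !![f₁ * f₂, 0; h₁ * f₂ + star g₁ * h₂, star g₁ * star g₂]) ∧
    -- `𝓑 + 𝓑*` is dense in `M₂(C(𝕋))`
    Dense {x : Matrix (Fin 2) (Fin 2) C(𝕋, ℂ) | ∃ a ∈ scriptB, ∃ b ∈ scriptB, x = a + star b} := by
  have hB : scriptB = discAlgebra.lowerTriangularStar := rfl
  have hA : IsClosed (discAlgebra : Set C(𝕋, ℂ)) := Subalgebra.isClosed_topologicalClosure _
  rw [hB]
  exact ⟨Subalgebra.isClosed_lowerTriangularStar hA, one_mem _, fun _ ha _ hb => add_mem ha hb,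
    fun c _ ha => Subalgebra.smul_mem _ ha c, fun _ ha _ hb => mul_mem ha hb,
    fun _ _ _ _ _ _ => Matrix.lowerTriangular_mul_fin_two ..,
    Subalgebra.dense_add_star_lowerTriangularStar dense_discAlgebra_add_star⟩
end
end
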